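/- arXiv:math/0006070 — 2 statements merged into one kernel-verified Lean document; each statement's English description precedes it below -/
import Mathlib

section
/- Let G denote the Barnes G-function, defined by G(1+z) = (2π)^{z/2} exp(-(z+1)z/2 - γ z²/2) ∏_{k=1}^∞ (1+z/k)^k exp(-z + z²/2k), where γ is the Euler–Mascheroni constant. Then G satisfies the functional equation G(1+z) = Γ(z) G(z) for all z that are not nonpositive integers. -/
open scoped Real

/-- The Barnes G-function, defined by its Weierstrass product:
`G(1+z) = (2π)^{z/2} exp(-(z+1)z/2 - γz²/2) ∏_{k≥1} (1+z/k)^k exp(-z + z²/(2k))`,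
i.e. `barnesG w` is this expression with `z = w - 1`. -/
noncomputable def barnesG (w : ℂ) : ℂ :=
  (2 * (Real.pi : ℂ)) ^ ((w - 1) / 2) *
    Complex.exp (-((w - 1) + 1) * (w - 1) / 2 -
      (Real.eulerMascheroniConstant : ℂ) * (w - 1) ^ 2 / 2) *
    ∏' k : ℕ,
      ((1 + (w - 1) / ((k : ℂ) + 1)) ^ (k + 1) *
        Complex.exp (-(w - 1) + (w - 1) ^ 2 / (2 * ((k : ℂ) + 1))))

/-!
Let `Pₙ(z)` be the `n`-th partial product of the Weierstrass factors of `G(1 + z)`. Each factor is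
`exp ((k+1)(log(1 + u) - u + u²/2))` with `u = z/(k+1)`, and this exponent is `O(1/k²)`, so the
products converge. Comparing the factors at `z` and `z - 1` telescopes to
`Pₙ(z) = Pₙ(z - 1) · (n + z)ⁿ e^{(z - 1/2)Hₙ - n} / (z(z + 1)⋯(z + n - 1))`.
Written through Gauss's sequence `nᶻ n! / (z(z + 1)⋯(z + n)) → Γ(z)`, the last quotient tends to
`Γ(z) e^z e^{γ(z - 1/2)} / √(2π)`, by `(1 + z/n)ⁿ → e^z`, `Hₙ - log n → γ` and Stirling's formula.
The prefactors of `G(1 + z)` and `G(z)` differ by exactly `√(2π) e^{-z - γ(z - 1/2)}`.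
-/

open Filter Topology Asymptotics Complex
open scoped Nat

local notation "γ" => Real.eulerMascheroniConstant

noncomputable def barnesFactor (z : ℂ) (k : ℕ) : ℂ :=
  (1 + z / ((k : ℂ) + 1)) ^ (k + 1) * exp (-z + z ^ 2 / (2 * ((k : ℂ) + 1)))

lemma barnesG_eq_tprod (w : ℂ) :
    barnesG w = (2 * (π : ℂ)) ^ ((w - 1) / 2) *
      exp (-((w - 1) + 1) * (w - 1) / 2 - (γ : ℂ) * (w - 1) ^ 2 / 2) *
      ∏' k, barnesFactor (w - 1) k :=
  rfl

lemma logTaylor_three (u : ℂ) : logTaylor 3 u = u - u ^ 2 / 2 := by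
  simp only [logTaylor_succ, logTaylor_zero, Pi.add_apply]
  norm_num
  ring

lemma barnesFactor_eq_exp {z : ℂ} {k : ℕ} (hz : 1 + z / ((k : ℂ) + 1) ≠ 0) :
    barnesFactor z k =
      exp (((k : ℂ) + 1) * (log (1 + z / ((k : ℂ) + 1)) - logTaylor 3 (z / ((k : ℂ) + 1)))) := by
  have hk : (k : ℂ) + 1 ≠ 0 := Nat.cast_add_one_ne_zero k
  have hexp : ((k : ℂ) + 1) * (log (1 + z / ((k : ℂ) + 1)) - logTaylor 3 (z / ((k : ℂ) + 1)))
      = ((k + 1 : ℕ) : ℂ) * log (1 + z / ((k : ℂ) + 1)) + (-z + z ^ 2 / (2 * ((k : ℂ) + 1))) := by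
    rw [logTaylor_three]
    push_cast
    field_simp
    ring
  rw [hexp, exp_add, exp_nat_mul, exp_log hz, barnesFactor]

lemma tendsto_div_natCast_add_one (z : ℂ) :
    Tendsto (fun k : ℕ => z / ((k : ℂ) + 1)) atTop (𝓝 0) := by
  simpa using (tendsto_add_atTop_iff_nat 1).2 (tendsto_const_div_atTop_nhds_zero_nat z)

lemma summable_mul_log_sub_logTaylor (z : ℂ) :
    Summable fun k : ℕ => ((k : ℂ) + 1) *
      (log (1 + z / ((k : ℂ) + 1)) - logTaylor 3 (z / ((k : ℂ) + 1))) := by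
  have hlog := (log_sub_logTaylor_isBigO 2).comp_tendsto (tendsto_div_natCast_add_one z)
  have hsum : Summable fun k : ℕ => (((k : ℝ) + 1) ^ 2)⁻¹ := by
    simpa using (summable_nat_add_iff 1).2 (Real.summable_nat_pow_inv.2 one_lt_two)
  refine summable_of_isBigO_nat hsum (((isBigO_refl _ atTop).mul hlog).trans ?_)
  refine IsBigO.of_bound (‖z‖ ^ 3) (Eventually.of_forall fun k => ?_)
  have hk : ‖(k : ℂ) + 1‖ = (k : ℝ) + 1 := by norm_cast
  have hk' : ‖(k : ℝ) + 1‖ = (k : ℝ) + 1 := Real.norm_of_nonneg (by positivity)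
  simp only [Function.comp_apply, norm_mul, norm_pow, norm_div, norm_inv, hk, hk']
  rw [div_pow]
  field_simp
  exact le_rfl

lemma multipliable_barnesFactor {z : ℂ} (hz : ∀ k : ℕ, z ≠ -((k : ℂ) + 1)) :
    Multipliable (barnesFactor z) := by
  refine ⟨_, (summable_mul_log_sub_logTaylor z).hasSum.cexp.congr_fun fun k => ?_⟩
  refine barnesFactor_eq_exp fun h => hz k ?_
  have hk : (k : ℂ) + 1 ≠ 0 := Nat.cast_add_one_ne_zero k
  field_simp at h
  linear_combination h

lemma barnesFactor_mul_eq_barnesFactor_sub_one_mul (z : ℂ) (n : ℕ) :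
    barnesFactor z n * ((n : ℂ) + z) ^ n * (z + n) * exp 1
      = barnesFactor (z - 1) n * ((n : ℂ) + 1 + z) ^ (n + 1) *
        exp ((z - 1 / 2) / ((n : ℂ) + 1)) := by
  have hn : (n : ℂ) + 1 ≠ 0 := Nat.cast_add_one_ne_zero n
  have hexp : exp (-z + z ^ 2 / (2 * ((n : ℂ) + 1))) * exp 1
      = exp (-(z - 1) + (z - 1) ^ 2 / (2 * ((n : ℂ) + 1))) * exp ((z - 1 / 2) / ((n : ℂ) + 1)) := by
    rw [← exp_add, ← exp_add]
    congr 1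
    field_simp
    ring
  rw [barnesFactor, barnesFactor,
    show 1 + z / ((n : ℂ) + 1) = ((n : ℂ) + 1 + z) / ((n : ℂ) + 1) by field_simp,
    show 1 + (z - 1) / ((n : ℂ) + 1) = ((n : ℂ) + z) / ((n : ℂ) + 1) by field_simp; ring,
    div_pow, div_pow]
  linear_combination
    (((n : ℂ) + z) ^ (n + 1) * ((n : ℂ) + 1 + z) ^ (n + 1) / ((n : ℂ) + 1) ^ (n + 1)) * hexp

lemma prod_barnesFactor_mul (z : ℂ) (n : ℕ) :
    (∏ k ∈ Finset.range n, barnesFactor z k) * (∏ j ∈ Finset.range n, (z + j)) * exp n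
      = (∏ k ∈ Finset.range n, barnesFactor (z - 1) k) * ((n : ℂ) + z) ^ n *
        exp ((z - 1 / 2) * harmonic n) := by
  induction n with
  | zero => simp
  | succ n ih =>
    simp only [Finset.prod_range_succ, harmonic_succ]
    push_cast
    rw [mul_add (z - 1 / 2), ← div_eq_mul_inv, exp_add ((z - 1 / 2) * _), exp_add (n : ℂ)]
    linear_combination (barnesFactor z n * (z + n) * exp 1) * ih
      + ((∏ k ∈ Finset.range n, barnesFactor (z - 1) k) * exp ((z - 1 / 2) * harmonic n))
        * barnesFactor_mul_eq_barnesFactor_sub_one_mul z n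

noncomputable def barnesRatio (z : ℂ) (n : ℕ) : ℂ :=
  ((n : ℂ) + z) ^ n * exp ((z - 1 / 2) * harmonic n - n) / ∏ j ∈ Finset.range n, (z + j)

lemma prod_range_add_ne_zero {z : ℂ} (hz : ∀ n : ℕ, z ≠ -n) (n : ℕ) :
    ∏ j ∈ Finset.range n, (z + j) ≠ 0 :=
  Finset.prod_ne_zero_iff.2 fun j _ h => hz j (eq_neg_of_add_eq_zero_left h)

lemma prod_barnesFactor_eq_mul_barnesRatio {z : ℂ} (hz : ∀ n : ℕ, z ≠ -n) (n : ℕ) :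
    ∏ k ∈ Finset.range n, barnesFactor z k
      = (∏ k ∈ Finset.range n, barnesFactor (z - 1) k) * barnesRatio z n := by
  have h := prod_barnesFactor_mul z n
  rw [barnesRatio, mul_div_assoc', eq_div_iff (prod_range_add_ne_zero hz n), exp_sub]
  generalize exp ((z - 1 / 2) * harmonic n) = E at h ⊢
  field_simp
  linear_combination h

lemma ofReal_sqrt_eq_cpow {x : ℝ} (hx : 0 ≤ x) : ((√x : ℝ) : ℂ) = (x : ℂ) ^ (1 / 2 : ℂ) := by
  rw [Real.sqrt_eq_rpow, ofReal_cpow hx]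
  push_cast
  rfl

lemma ofReal_sqrt_natCast {n : ℕ} (hn : n ≠ 0) : ((√n : ℝ) : ℂ) = exp (log n / 2) := by
  rw [ofReal_sqrt_eq_cpow (Nat.cast_nonneg n), ofReal_natCast,
    cpow_def_of_ne_zero (Nat.cast_ne_zero.2 hn), mul_one_div]

lemma natCast_factorial_eq_stirlingSeq {n : ℕ} (hn : n ≠ 0) :
    (n ! : ℂ) = ((√2 * Stirling.stirlingSeq n : ℝ) : ℂ) * (n : ℂ) ^ n * exp (log n / 2 - n) := by
  have hreal : (n ! : ℝ) = √2 * Stirling.stirlingSeq n * √n * (n : ℝ) ^ n * Real.exp (-n) := by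
    have hn' : (0 : ℝ) < n := by positivity
    rw [Stirling.stirlingSeq, Real.sqrt_mul zero_le_two, Real.exp_neg, div_pow, ← Real.exp_nat_mul,
      mul_one]
    field_simp
  rw [← ofReal_natCast, hreal, exp_sub]
  push_cast
  rw [ofReal_sqrt_natCast hn, exp_neg]
  ring

lemma barnesRatio_eq_GammaSeq_mul {z : ℂ} (hz : ∀ n : ℕ, z ≠ -n) {n : ℕ} (hn : n ≠ 0) :
    barnesRatio z n = GammaSeq z n * (1 + z / n) ^ (n + 1) *
      exp ((z - 1 / 2) * (harmonic n - log n)) / ((√2 * Stirling.stirlingSeq n : ℝ) : ℂ) := by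
  have hn' : (n : ℂ) ≠ 0 := Nat.cast_ne_zero.2 hn
  have hs : ((√2 * Stirling.stirlingSeq n : ℝ) : ℂ) ≠ 0 := by
    have : 0 < Stirling.stirlingSeq n := by
      obtain ⟨m, rfl⟩ := Nat.exists_eq_succ_of_ne_zero hn
      exact Stirling.stirlingSeq'_pos m
    exact_mod_cast (by positivity : 0 < √2 * Stirling.stirlingSeq n).ne'
  have hzn : z + n ≠ 0 := fun h => hz n (eq_neg_of_add_eq_zero_left h)
  have hQ := prod_range_add_ne_zero hz n
  have hexp : exp (log n * z) * exp (log n / 2 - n) * exp ((z - 1 / 2) * (harmonic n - log n))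
      = exp ((z - 1 / 2) * harmonic n - n) * n := by
    rw [← exp_log hn', ← exp_add, ← exp_add, ← exp_add, exp_log hn']
    ring_nf
  rw [barnesRatio, GammaSeq, Finset.prod_range_succ, natCast_factorial_eq_stirlingSeq hn,
    cpow_def_of_ne_zero hn', one_add_div hn', div_pow]
  generalize exp (log n * z) = A, exp (log n / 2 - n) = B,
    exp ((z - 1 / 2) * (harmonic n - log n)) = C, exp ((z - 1 / 2) * harmonic n - n) = D at hexp ⊢
  field_simp
  linear_combination -((n : ℂ) ^ n * ((n : ℂ) + z) ^ (n + 1)) * hexp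

lemma tendsto_one_add_div_pow_succ (z : ℂ) :
    Tendsto (fun n : ℕ => (1 + z / n) ^ (n + 1)) atTop (𝓝 (exp z)) := by
  simpa [pow_succ] using
    (tendsto_one_add_div_pow_exp z).mul ((tendsto_const_div_atTop_nhds_zero_nat z).const_add 1)

lemma tendsto_exp_mul_harmonic_sub_log (a : ℂ) :
    Tendsto (fun n : ℕ => exp (a * (harmonic n - log n))) atTop (𝓝 (exp (a * γ))) := by
  have h := (continuous_ofReal.tendsto _).comp Real.tendsto_harmonic_sub_log
  refine ((continuous_exp.tendsto _).comp (h.const_mul a)).congr fun n => ?_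
  simp [natCast_log]

lemma tendsto_sqrt_two_mul_stirlingSeq :
    Tendsto (fun n : ℕ => ((√2 * Stirling.stirlingSeq n : ℝ) : ℂ)) atTop
      (𝓝 ((√(2 * π) : ℝ) : ℂ)) := by
  rw [Real.sqrt_mul zero_le_two]
  exact (continuous_ofReal.tendsto _).comp (Stirling.tendsto_stirlingSeq_sqrt_pi.const_mul _)

lemma tendsto_barnesRatio {z : ℂ} (hz : ∀ n : ℕ, z ≠ -n) :
    Tendsto (barnesRatio z) atTop (𝓝 (Gamma z * exp z *
      exp ((z - 1 / 2) * γ) / ((√(2 * π) : ℝ) : ℂ))) := by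
  have hπ : ((√(2 * π) : ℝ) : ℂ) ≠ 0 := by exact_mod_cast (by positivity : 0 < √(2 * π)).ne'
  refine ((((GammaSeq_tendsto_Gamma z).mul (tendsto_one_add_div_pow_succ z)).mul
    (tendsto_exp_mul_harmonic_sub_log _)).div tendsto_sqrt_two_mul_stirlingSeq hπ).congr' ?_
  filter_upwards [eventually_ne_atTop 0] with n hn
  exact (barnesRatio_eq_GammaSeq_mul hz hn).symm

lemma tprod_barnesFactor_eq_mul {z : ℂ} (hz : ∀ n : ℕ, z ≠ -n) :
    ∏' k, barnesFactor z k = (∏' k, barnesFactor (z - 1) k) * (Gamma z * exp z *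
      exp ((z - 1 / 2) * γ) / ((√(2 * π) : ℝ) : ℂ)) := by
  have h₁ := multipliable_barnesFactor fun k h => hz (k + 1) (by push_cast; exact h)
  have h₂ := multipliable_barnesFactor (z := z - 1) fun k h => hz k (by linear_combination h)
  refine tendsto_nhds_unique h₁.hasProd.tendsto_prod_nat ?_
  exact (h₂.hasProd.tendsto_prod_nat.mul (tendsto_barnesRatio hz)).congr fun n =>
    (prod_barnesFactor_eq_mul_barnesRatio hz n).symm

/-- the Barnes G-function satisfies `G(1+z) = Γ(z) G(z)` for all `z`
that are not nonpositive integers. -/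
theorem stmt_2 (z : ℂ) (hz : ∀ n : ℕ, z ≠ -(n : ℂ)) :
    barnesG (1 + z) = Complex.Gamma z * barnesG z := by
  have hπ : ((√(2 * π) : ℝ) : ℂ) ≠ 0 := by exact_mod_cast (by positivity : 0 < √(2 * π)).ne'
  have hcpow : (2 * (π : ℂ)) ^ (z / 2) = (2 * (π : ℂ)) ^ ((z - 1) / 2) * ((√(2 * π) : ℝ) : ℂ) := by
    rw [ofReal_sqrt_eq_cpow (by positivity)]
    push_cast
    rw [← cpow_add _ _ (by exact_mod_cast Real.two_pi_pos.ne')]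
    ring_nf
  have hexp : exp (-(z + 1) * z / 2 - γ * z ^ 2 / 2) * exp z * exp ((z - 1 / 2) * γ)
      = exp (-((z - 1) + 1) * (z - 1) / 2 - γ * (z - 1) ^ 2 / 2) := by
    rw [← exp_add, ← exp_add]
    ring_nf
  rw [barnesG_eq_tprod, barnesG_eq_tprod, add_sub_cancel_left, tprod_barnesFactor_eq_mul hz, hcpow,
    ← hexp]
  field_simp
end

section
/- Let A and B be bounded operators on a Hilbert space such that AB and BA are trace class. Then det(I + AB) = det(I + BA), where det denotes the Fredholm determinant. -/
open scoped InnerProductSpace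

variable {H : Type*} [NormedAddCommGroup H] [InnerProductSpace ℂ H] [CompleteSpace H]

/-- A bounded operator on a Hilbert space is trace class (nuclear) if it admits a
representation `T x = ∑ₖ ⟪uₖ, x⟫ vₖ` with `∑ₖ ‖uₖ‖‖vₖ‖ < ∞`. -/
def IsTraceClass (T : H →L[ℂ] H) : Prop :=
  ∃ u v : ℕ → H, Summable (fun k => ‖u k‖ * ‖v k‖) ∧
    ∀ x, T x = ∑' k, ⟪u k, x⟫_ℂ • v k

/-- `TraceNormLT T c` asserts that `T` has a nuclear representation of total weight `< c`;
this holds for all `c` greater than the trace norm of `T`. -/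
def TraceNormLT (T : H →L[ℂ] H) (c : ℝ) : Prop :=
  ∃ u v : ℕ → H, Summable (fun k => ‖u k‖ * ‖v k‖) ∧
    (∀ x, T x = ∑' k, ⟪u k, x⟫_ℂ • v k) ∧ (∑' k, ‖u k‖ * ‖v k‖) < c

/-- The determinant `det(I + F)` of a finite-rank perturbation of the identity, computed
as the determinant of the restriction of `I + F` to the (invariant) range of `F`. -/
noncomputable def finRankDet (F : H →L[ℂ] H) : ℂ :=
  LinearMap.det ((LinearMap.id + (F : H →ₗ[ℂ] H)).restrict
    (p := LinearMap.range (F : H →ₗ[ℂ] H)) (q := LinearMap.range (F : H →ₗ[ℂ] H))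
    (fun x hx => by
      simp only [LinearMap.add_apply, LinearMap.id_apply]
      exact Submodule.add_mem _ hx (LinearMap.mem_range_self _ x)))

/-- `IsFredholmDet fdet` asserts that `T ↦ fdet T` agrees with the finite-dimensional
determinant `det(I + F)` on finite-rank operators `F` and is continuous in the trace
norm on trace class operators.  These properties characterize the Fredholm determinant
`fdet T = det(I + T)` on trace class operators. -/
def IsFredholmDet (fdet : (H →L[ℂ] H) → ℂ) : Prop :=
  (∀ F : H →L[ℂ] H, FiniteDimensional ℂ (LinearMap.range (F : H →ₗ[ℂ] H)) →
      fdet F = finRankDet F) ∧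
  (∀ T : H →L[ℂ] H, IsTraceClass T → ∀ ε > (0 : ℝ), ∃ δ > (0 : ℝ),
      ∀ S : H →L[ℂ] H, IsTraceClass S → TraceNormLT (S - T) δ → ‖fdet S - fdet T‖ < ε)

/-- `IsOperatorTrace tr` asserts that `tr` computes the trace `∑ₖ ⟪uₖ, vₖ⟫` of any
trace class operator given by a nuclear representation. -/
def IsOperatorTrace (tr : (H →L[ℂ] H) → ℂ) : Prop :=
  ∀ (T : H →L[ℂ] H) (u v : ℕ → H), Summable (fun k => ‖u k‖ * ‖v k‖) →
    (∀ x, T x = ∑' k, ⟪u k, x⟫_ℂ • v k) → tr T = ∑' k, ⟪u k, v k⟫_ℂ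

/-!
For trace-class `X` and bounded `Y`, `det(I + XY) = det(I + YX)`: approximating `X` in trace norm
by the partial sums of a nuclear representation reduces this to the finite-dimensional
Weinstein–Aronszajn identity.

In the theorem neither `A` nor `B` need be trace class, so regularize with
`Jₜ = (t + B⋆B)⁻¹`, `t > 0`. Applying the above twice,
`det(I + AB·JₜB⋆B) = det(I + B·ABJₜB⋆) = det(I + BA·BJₜB⋆) = det(I + BJₜB⋆·BA)`,
and `BJₜB⋆ = (t + BB⋆)⁻¹BB⋆`. As `t → 0⁺`, `JₜB⋆B = I - tJₜ` tends strongly to `I - P`, with `P`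
the projection onto `ker B`, and `AB(I - P) = AB`; likewise `(t + BB⋆)⁻¹BB⋆ → I - P'` with `P'`
the projection onto `ker B⋆ ⊥ range B`. Composed with a trace-class operator, strong convergence
becomes trace-norm convergence (dominated convergence on a nuclear representation), so the outer
determinants tend to `det(I + AB)` and `det(I + BA)`.
-/

open ContinuousLinearMap Filter Topology

section InnerProductSpace

variable {E : Type*} [NormedAddCommGroup E] [InnerProductSpace ℂ E]

/-- `IsTraceClass T` unfolds to `∃ u v, HasNuclearRep T u v`. -/
def HasNuclearRep (T : E →L[ℂ] E) (u v : ℕ → E) : Prop :=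
  Summable (fun k => ‖u k‖ * ‖v k‖) ∧ ∀ x, T x = ∑' k, ⟪u k, x⟫_ℂ • v k

theorem HasNuclearRep.isTraceClass {T : E →L[ℂ] E} {u v : ℕ → E} (h : HasNuclearRep T u v) :
    IsTraceClass T :=
  ⟨u, v, h⟩

theorem IsFredholmDet.tendsto_of_dominated {fdet : (E →L[ℂ] E) → ℂ} (hdet : IsFredholmDet fdet)
    {T : E →L[ℂ] E} (hT : IsTraceClass T) {ι : Type*} {l : Filter ι} {S : ι → E →L[ℂ] E}
    (hS : ∀ᶠ i in l, IsTraceClass (S i)) {u v : ι → ℕ → E}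
    (hrep : ∀ᶠ i in l, HasNuclearRep (S i - T) (u i) (v i)) {g : ℕ → ℝ} (hg : Summable g)
    (hbound : ∀ᶠ i in l, ∀ k, ‖u i k‖ * ‖v i k‖ ≤ g k)
    (hlim : ∀ k, Tendsto (fun i => ‖u i k‖ * ‖v i k‖) l (𝓝 0)) :
    Tendsto (fun i => fdet (S i)) l (𝓝 (fdet T)) := by
  have hw : Tendsto (fun i => ∑' k, ‖u i k‖ * ‖v i k‖) l (𝓝 0) := by
    simpa using tendsto_tsum_of_dominated_convergence hg hlim
      (hbound.mono fun i hi k => by simpa [abs_of_nonneg] using hi k)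
  refine Metric.tendsto_nhds.2 fun ε hε => ?_
  obtain ⟨δ, hδ, hcont⟩ := hdet.2 T hT ε hε
  filter_upwards [hS, hrep, hw.eventually_lt_const hδ] with i hSi hrepi hwi
  exact dist_eq_norm (fdet (S i)) _ ▸ hcont _ hSi ⟨_, _, hrepi.1, hrepi.2, hwi⟩

theorem LinearMap.det_id_add_comp_comm {K V W : Type*} [Field K] [AddCommGroup V] [Module K V]
    [AddCommGroup W] [Module K W] [FiniteDimensional K V] [FiniteDimensional K W]
    (f : V →ₗ[K] W) (g : W →ₗ[K] V) :
    LinearMap.det (LinearMap.id + g ∘ₗ f) = LinearMap.det (LinearMap.id + f ∘ₗ g) := by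
  let bV := Module.finBasis K V
  let bW := Module.finBasis K W
  rw [← LinearMap.det_toMatrix bV, ← LinearMap.det_toMatrix bW, map_add, map_add,
    LinearMap.toMatrix_id, LinearMap.toMatrix_id, LinearMap.toMatrix_comp bV bW bV,
    LinearMap.toMatrix_comp bW bV bW]
  exact Matrix.det_one_add_mul_comm _ _

theorem finRankDet_comp_comm (S T : E →L[ℂ] E)
    [FiniteDimensional ℂ (LinearMap.range ((S ∘L T : E →L[ℂ] E) : E →ₗ[ℂ] E))]
    [FiniteDimensional ℂ (LinearMap.range ((T ∘L S : E →L[ℂ] E) : E →ₗ[ℂ] E))] :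
    finRankDet (S ∘L T) = finRankDet (T ∘L S) := by
  let f := (T : E →ₗ[ℂ] E).restrict (p := LinearMap.range ((S ∘L T : E →L[ℂ] E) : E →ₗ[ℂ] E))
    (q := LinearMap.range ((T ∘L S : E →L[ℂ] E) : E →ₗ[ℂ] E))
    (by rintro _ ⟨y, rfl⟩; exact ⟨T y, rfl⟩)
  let g := (S : E →ₗ[ℂ] E).restrict (p := LinearMap.range ((T ∘L S : E →L[ℂ] E) : E →ₗ[ℂ] E))
    (q := LinearMap.range ((S ∘L T : E →L[ℂ] E) : E →ₗ[ℂ] E))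
    (by rintro _ ⟨y, rfl⟩; exact ⟨S y, rfl⟩)
  have hST : finRankDet (S ∘L T) = LinearMap.det (LinearMap.id + g ∘ₗ f) := rfl
  have hTS : finRankDet (T ∘L S) = LinearMap.det (LinearMap.id + f ∘ₗ g) := rfl
  rw [hST, hTS, LinearMap.det_id_add_comp_comm]

theorem IsFredholmDet.comp_comm_of_finiteDimensional {fdet : (E →L[ℂ] E) → ℂ}
    (hdet : IsFredholmDet fdet) (F Y : E →L[ℂ] E)
    [FiniteDimensional ℂ (LinearMap.range (F : E →ₗ[ℂ] E))] :
    fdet (F ∘L Y) = fdet (Y ∘L F) := by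
  have hFY : FiniteDimensional ℂ (LinearMap.range ((F ∘L Y : E →L[ℂ] E) : E →ₗ[ℂ] E)) :=
    Submodule.finiteDimensional_of_le (LinearMap.range_comp_le_range _ _)
  have hYF : FiniteDimensional ℂ (LinearMap.range ((Y ∘L F : E →L[ℂ] E) : E →ₗ[ℂ] E)) := by
    change FiniteDimensional ℂ (LinearMap.range ((Y : E →ₗ[ℂ] E) ∘ₗ (F : E →ₗ[ℂ] E)))
    rw [LinearMap.range_comp]
    infer_instance
  rw [hdet.1 _ hFY, hdet.1 _ hYF, finRankDet_comp_comm]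

noncomputable def nuclearPartialSum (u v : ℕ → E) (n : ℕ) : E →L[ℂ] E :=
  ∑ k ∈ Finset.range n, (innerSL ℂ (u k)).smulRight (v k)

theorem nuclearPartialSum_apply (u v : ℕ → E) (n : ℕ) (x : E) :
    nuclearPartialSum u v n x = ∑ k ∈ Finset.range n, ⟪u k, x⟫_ℂ • v k := by
  simp [nuclearPartialSum, sum_apply]

theorem hasNuclearRep_nuclearPartialSum (u v : ℕ → E) (n : ℕ) :
    HasNuclearRep (nuclearPartialSum u v n) u (fun k => if k < n then v k else 0) := by
  have hzero : ∀ k ∉ Finset.range n, (if k < n then v k else 0) = 0 := fun k hk => by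
    simp_all
  refine ⟨summable_of_ne_finset_zero (s := Finset.range n) fun k hk => by simp [hzero k hk],
    fun x => ?_⟩
  rw [nuclearPartialSum_apply, tsum_eq_sum fun k hk => by simp [hzero k hk]]
  exact Finset.sum_congr rfl fun k hk => by simp_all

instance finiteDimensional_range_nuclearPartialSum (u v : ℕ → E) (n : ℕ) :
    FiniteDimensional ℂ (LinearMap.range (nuclearPartialSum u v n : E →ₗ[ℂ] E)) := by
  have : FiniteDimensional ℂ (Submodule.span ℂ (v '' Finset.range n)) :=
    FiniteDimensional.span_of_finite ℂ ((Finset.range n).finite_toSet.image v)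
  refine Submodule.finiteDimensional_of_le (S₂ := Submodule.span ℂ (v '' Finset.range n)) ?_
  rintro _ ⟨x, rfl⟩
  rw [coe_coe, nuclearPartialSum_apply]
  exact Submodule.sum_mem _ fun k hk => Submodule.smul_mem _ _ (Submodule.subset_span ⟨k, hk, rfl⟩)

end InnerProductSpace

section HilbertNuclearRep

variable {T : H →L[ℂ] H} {u v : ℕ → H}

theorem summable_inner_smul (hw : Summable fun k => ‖u k‖ * ‖v k‖) (x : H) :
    Summable fun k => ⟪u k, x⟫_ℂ • v k := by
  refine .of_norm_bounded (hw.mul_right ‖x‖) fun k => ?_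
  rw [norm_smul, mul_right_comm]
  gcongr
  exact norm_inner_le_norm _ _

theorem HasNuclearRep.comp_left (h : HasNuclearRep T u v) (Y : H →L[ℂ] H) :
    HasNuclearRep (Y ∘L T) u (fun k => Y (v k)) := by
  refine ⟨.of_nonneg_of_le (fun k => by positivity) (fun k => ?_) (h.1.mul_left ‖Y‖),
    fun x => ?_⟩
  · rw [mul_left_comm]
    gcongr
    exact le_opNorm _ _
  · rw [comp_apply, h.2 x, Y.map_tsum (summable_inner_smul h.1 x)]
    simp_rw [map_smul]

theorem HasNuclearRep.comp_right (h : HasNuclearRep T u v) (Y : H →L[ℂ] H) :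
    HasNuclearRep (T ∘L Y) (fun k => adjoint Y (u k)) v := by
  refine ⟨.of_nonneg_of_le (fun k => by positivity) (fun k => ?_)
    (h.1.mul_left ‖adjoint Y‖), fun x => ?_⟩
  · rw [← mul_assoc]
    gcongr
    exact le_opNorm _ _
  · simp_rw [comp_apply, h.2 (Y x), adjoint_inner_left]

theorem HasNuclearRep.sub {T' : H →L[ℂ] H} {v' : ℕ → H} (h : HasNuclearRep T u v)
    (h' : HasNuclearRep T' u v') : HasNuclearRep (T - T') u (v - v') := by
  refine ⟨.of_nonneg_of_le (fun k => by positivity) (fun k => ?_) (h.1.add h'.1), fun x => ?_⟩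
  · rw [← mul_add]
    gcongr
    exact norm_sub_le _ _
  · rw [sub_apply, h.2, h'.2, ← (summable_inner_smul h.1 x).tsum_sub (summable_inner_smul h'.1 x)]
    simp_rw [Pi.sub_apply, smul_sub]

theorem IsTraceClass.comp_left {X : H →L[ℂ] H} (hX : IsTraceClass X) (Y : H →L[ℂ] H) :
    IsTraceClass (Y ∘L X) :=
  let ⟨_, _, h⟩ := hX; (HasNuclearRep.comp_left h Y).isTraceClass

theorem IsTraceClass.comp_right {X : H →L[ℂ] H} (hX : IsTraceClass X) (Y : H →L[ℂ] H) :
    IsTraceClass (X ∘L Y) :=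
  let ⟨_, _, h⟩ := hX; (HasNuclearRep.comp_right h Y).isTraceClass

theorem IsFredholmDet.comp_comm {fdet : (H →L[ℂ] H) → ℂ} (hdet : IsFredholmDet fdet)
    {X : H →L[ℂ] H} (hX : IsTraceClass X) (Y : H →L[ℂ] H) :
    fdet (X ∘L Y) = fdet (Y ∘L X) := by
  obtain ⟨u, v, (hrep : HasNuclearRep X u v)⟩ := id hX
  set Xn := nuclearPartialSum u v
  set head := fun (n k : ℕ) => if k < n then v k else 0
  have hdiff n : HasNuclearRep (Xn n - X) u (head n - v) :=
    (hasNuclearRep_nuclearPartialSum u v n).sub hrep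
  have hsmall (f : H →L[ℂ] H) n k : ‖f ((head n - v) k)‖ ≤ ‖f (v k)‖ := by
    by_cases hk : k < n <;> simp [head, hk]
  have hlim (a : ℕ → H) (f : H →L[ℂ] H) k :
      Tendsto (fun n => ‖a k‖ * ‖f ((head n - v) k)‖) atTop (𝓝 0) :=
    tendsto_const_nhds.congr' <| (eventually_gt_atTop k).mono fun n hn => by simp [head, hn]
  have hright : Tendsto (fun n => fdet (Xn n ∘L Y)) atTop (𝓝 (fdet (X ∘L Y))) :=
    hdet.tendsto_of_dominated (hX.comp_right Y)
      (.of_forall fun n => (hasNuclearRep_nuclearPartialSum u v n).isTraceClass.comp_right Y)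
      (.of_forall fun n => sub_comp (Xn n) X Y ▸ (hdiff n).comp_right Y) (hrep.comp_right Y).1
      (.of_forall fun n k => by gcongr; simpa using hsmall 1 n k) (by simpa using hlim _ 1)
  have hleft : Tendsto (fun n => fdet (Y ∘L Xn n)) atTop (𝓝 (fdet (Y ∘L X))) :=
    hdet.tendsto_of_dominated (hX.comp_left Y)
      (.of_forall fun n => (hasNuclearRep_nuclearPartialSum u v n).isTraceClass.comp_left Y)
      (.of_forall fun n => comp_sub Y (Xn n) X ▸ (hdiff n).comp_left Y) (hrep.comp_left Y).1
      (.of_forall fun n k => by gcongr; exact hsmall Y n k) (hlim u Y)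
  exact tendsto_nhds_unique (hright.congr fun n => hdet.comp_comm_of_finiteDimensional _ Y) hleft

end HilbertNuclearRep

theorem tendsto_apply_zero_of_mem_closure {𝕜 E F : Type*} [NontriviallyNormedField 𝕜]
    [SeminormedAddCommGroup E] [SeminormedAddCommGroup F] [NormedSpace 𝕜 E] [NormedSpace 𝕜 F]
    {ι : Type*} {l : Filter ι} {T : ι → E →L[𝕜] F} (hT : ∀ᶠ i in l, ‖T i‖ ≤ 1) {s : Set E}
    (hs : ∀ y ∈ s, Tendsto (fun i => T i y) l (𝓝 0)) {x : E} (hx : x ∈ closure s) :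
    Tendsto (fun i => T i x) l (𝓝 0) := by
  refine Metric.tendsto_nhds.2 fun ε hε => ?_
  obtain ⟨y, hys, hxy⟩ := Metric.mem_closure_iff.1 hx (ε / 2) (half_pos hε)
  filter_upwards [hT, Metric.tendsto_nhds.1 (hs y hys) (ε / 2) (half_pos hε)] with i hTi hyi
  rw [dist_zero_right] at hyi ⊢
  calc ‖T i x‖ ≤ ‖T i (x - y)‖ + ‖T i y‖ := by
        simpa using norm_add_le (T i (x - y)) (T i y)
    _ ≤ ‖x - y‖ + ‖T i y‖ := by
        gcongr
        exact (le_opNorm _ _).trans (mul_le_of_le_one_left (norm_nonneg _) hTi)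
    _ < ε := by rw [← dist_eq_norm]; linarith

section Tikhonov

variable {A : Type*} [CStarAlgebra A] [PartialOrder A] [StarOrderedRing A] (b : A) {t : ℝ}

/-- `(t + b⋆b)⁻¹`, a genuine inverse for `t > 0` (`Ring.inverse` is `0` on non-units). -/
noncomputable def tikhonovInv (t : ℝ) : A :=
  Ring.inverse (algebraMap ℝ A t + star b * b)

theorem isStrictlyPositive_algebraMap_add_star_mul_self (ht : 0 < t) :
    IsStrictlyPositive (algebraMap ℝ A t + star b * b) :=
  (isStrictlyPositive_algebraMap ht).add_nonneg (star_mul_self_nonneg b)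

theorem tikhonovInv_mul_cancel (ht : 0 < t) :
    tikhonovInv b t * (algebraMap ℝ A t + star b * b) = 1 :=
  Ring.inverse_mul_cancel _ (isStrictlyPositive_algebraMap_add_star_mul_self b ht).isUnit

theorem mul_tikhonovInv_cancel (ht : 0 < t) :
    (algebraMap ℝ A t + star b * b) * tikhonovInv b t = 1 :=
  Ring.mul_inverse_cancel _ (isStrictlyPositive_algebraMap_add_star_mul_self b ht).isUnit

theorem tikhonovInv_mul_star_mul_self (ht : 0 < t) :
    tikhonovInv b t * (star b * b) = 1 - t • tikhonovInv b t := by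
  rw [← tikhonovInv_mul_cancel b ht, mul_add, Algebra.smul_def, Algebra.commutes,
    add_sub_cancel_left]

theorem mul_tikhonovInv (ht : 0 < t) : b * tikhonovInv b t = tikhonovInv (star b) t * b := by
  have hcomm : (algebraMap ℝ A t + star (star b) * star b) * b
      = b * (algebraMap ℝ A t + star b * b) := by
    rw [star_star, add_mul, mul_add, Algebra.commutes, mul_assoc]
  calc b * tikhonovInv b t
      = tikhonovInv (star b) t * ((algebraMap ℝ A t + star (star b) * star b) * b)
        * tikhonovInv b t := by
        rw [← mul_assoc, tikhonovInv_mul_cancel (star b) ht, one_mul]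
    _ = tikhonovInv (star b) t * b := by
      rw [hcomm, mul_assoc, mul_assoc, mul_tikhonovInv_cancel b ht, mul_one]

theorem isSelfAdjoint_tikhonovInv (ht : 0 < t) : IsSelfAdjoint (tikhonovInv b t) :=
  (isStrictlyPositive_algebraMap_add_star_mul_self b ht).ringInverse.isSelfAdjoint

theorem norm_tikhonovInv_le (ht : 0 < t) : ‖tikhonovInv b t‖ ≤ t⁻¹ := by
  have hinv : Ring.inverse (algebraMap ℝ A t) = algebraMap ℝ A t⁻¹ := by
    have hunit : IsUnit (algebraMap ℝ A t) := (isStrictlyPositive_algebraMap ht).isUnit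
    rw [← mul_one (Ring.inverse _), Ring.inverse_mul_eq_iff_eq_mul _ _ _ hunit, ← map_mul,
      mul_inv_cancel₀ ht.ne', map_one]
  have hle : tikhonovInv b t ≤ algebraMap ℝ A t⁻¹ :=
    hinv ▸ CStarAlgebra.ringInverse_le_ringInverse
      (le_add_of_nonneg_right (star_mul_self_nonneg b)) (isStrictlyPositive_algebraMap ht)
  -- `‖1‖ = ‖1⋆ * 1‖ = ‖1‖²`, so `‖1‖ ≤ 1` even when `A` is trivial
  have hone : ‖(1 : A)‖ ≤ 1 := by
    have h := CStarRing.norm_star_mul_self (x := (1 : A))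
    rw [star_one, one_mul] at h
    nlinarith [norm_nonneg (1 : A)]
  calc ‖tikhonovInv b t‖
      ≤ ‖algebraMap ℝ A t⁻¹‖ := CStarAlgebra.norm_le_norm_of_nonneg_of_le
        (isStrictlyPositive_algebraMap_add_star_mul_self b ht).ringInverse.nonneg hle
    _ ≤ t⁻¹ := by
      rw [Algebra.algebraMap_eq_smul_one, norm_smul, Real.norm_of_nonneg (by positivity)]
      exact mul_le_of_le_one_right (by positivity) hone

theorem norm_smul_tikhonovInv_le_one (ht : 0 < t) : ‖t • tikhonovInv b t‖ ≤ 1 := by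
  rw [norm_smul, Real.norm_of_nonneg ht.le, ← mul_inv_cancel₀ ht.ne']
  exact mul_le_mul_of_nonneg_left (norm_tikhonovInv_le b ht) ht.le

end Tikhonov

section KernelProjection

variable (B : H →L[ℂ] H) {t : ℝ}

theorem mul_starProjection_ker : B * B.ker.starProjection = 0 := by
  ext x
  exact LinearMap.mem_ker.1 (B.ker.starProjection_apply_mem x)

theorem starProjection_ker_star_mul : (star B).ker.starProjection * B = 0 := by
  simpa [star_mul, (isSelfAdjoint_starProjection _).star_eq] using
    congrArg star (mul_starProjection_ker (star B))

theorem smul_tikhonovInv_mul_starProjection_ker (ht : 0 < t) :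
    t • tikhonovInv B t * B.ker.starProjection = B.ker.starProjection := by
  have h := congrArg (· * B.ker.starProjection) (tikhonovInv_mul_star_mul_self B ht)
  simp only [mul_assoc, mul_starProjection_ker, mul_zero, sub_mul, one_mul] at h
  exact (sub_eq_zero.1 h.symm).symm

theorem orthogonal_ker_eq_closure_range_star_mul_self :
    B.kerᗮ = (star B * B).range.topologicalClosure := by
  rw [← ker_adjoint_comp_self B, orthogonal_ker]
  congr
  exact (IsSelfAdjoint.star_mul_self B).star_eq

theorem tendsto_smul_tikhonovInv_apply (x : H) :
    Tendsto (fun t => t • tikhonovInv B t x) (𝓝[>] 0) (𝓝 (B.ker.starProjection x)) := by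
  set P := B.ker.starProjection
  have hcontr : ∀ᶠ t in 𝓝[>] (0 : ℝ), ‖t • tikhonovInv B t‖ ≤ 1 :=
    eventually_mem_nhdsWithin.mono fun t => norm_smul_tikhonovInv_le_one B
  -- `t (t + B⋆B)⁻¹ B⋆B z = t z - t² (t + B⋆B)⁻¹ z` is `O(t)`
  have hrange : ∀ y ∈ ((star B * B).range : Set H),
      Tendsto (fun t => (t • tikhonovInv B t) y) (𝓝[>] 0) (𝓝 0) := by
    rintro _ ⟨z, rfl⟩
    refine squeeze_zero_norm' (a := fun t => 2 * ‖z‖ * t) ?_ <| tendsto_nhdsWithin_of_tendsto_nhds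
      (by simpa using (tendsto_id (x := 𝓝 (0 : ℝ))).const_mul (2 * ‖z‖))
    filter_upwards [eventually_mem_nhdsWithin] with t (ht : 0 < t)
    calc ‖(t • tikhonovInv B t) ((star B * B : H →L[ℂ] H) z)‖
        = t * ‖z - (t • tikhonovInv B t) z‖ := by
          rw [smul_apply, ← mul_apply_eq_comp, tikhonovInv_mul_star_mul_self B ht,
            norm_smul, Real.norm_of_nonneg ht.le, sub_apply, one_apply_eq_self]
      _ ≤ t * (‖z‖ + 1 * ‖z‖) := by
          gcongr
          exact (norm_sub_le _ _).trans (add_le_add le_rfl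
            ((t • tikhonovInv B t).le_of_opNorm_le (norm_smul_tikhonovInv_le_one B ht) z))
      _ = 2 * ‖z‖ * t := by ring
  have hclosure : x - P x ∈ closure ((star B * B).range : Set H) := by
    rw [← Submodule.topologicalClosure_coe, ← orthogonal_ker_eq_closure_range_star_mul_self]
    exact Submodule.sub_starProjection_mem_orthogonal x
  have heq : ∀ᶠ t in 𝓝[>] (0 : ℝ), (t • tikhonovInv B t) (x - P x) + P x = t • tikhonovInv B t x :=
    eventually_mem_nhdsWithin.mono fun t (ht : 0 < t) => by
      rw [map_sub, ← mul_apply_eq_comp, smul_tikhonovInv_mul_starProjection_ker B ht,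
        sub_add_cancel, smul_apply]
  simpa using
    ((tendsto_apply_zero_of_mem_closure hcontr hrange hclosure).add_const (P x)).congr' heq

end KernelProjection

section TraceNormLimits

variable (B : H →L[ℂ] H) {fdet : (H →L[ℂ] H) → ℂ}

theorem isSelfAdjoint_starProjection_ker_sub_smul_tikhonovInv {t : ℝ} (ht : 0 < t) :
    IsSelfAdjoint (B.ker.starProjection - t • tikhonovInv B t) :=
  (isSelfAdjoint_starProjection _).sub
    (IsSelfAdjoint.smul (R := ℝ) (IsSelfAdjoint.all t) (isSelfAdjoint_tikhonovInv B ht))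

theorem norm_starProjection_ker_sub_smul_tikhonovInv_apply_le {t : ℝ} (ht : 0 < t) (x : H) :
    ‖(B.ker.starProjection - t • tikhonovInv B t) x‖ ≤ 2 * ‖x‖ := by
  rw [sub_apply, two_mul]
  refine (norm_sub_le _ _).trans (add_le_add (B.ker.norm_starProjection_apply_le x) ?_)
  simpa using (t • tikhonovInv B t).le_of_opNorm_le (norm_smul_tikhonovInv_le_one B ht) x

theorem tendsto_starProjection_ker_sub_smul_tikhonovInv_apply (x : H) :
    Tendsto (fun t => (B.ker.starProjection - t • tikhonovInv B t) x) (𝓝[>] 0) (𝓝 0) := by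
  simpa using (tendsto_smul_tikhonovInv_apply B x).const_sub (B.ker.starProjection x)

theorem IsFredholmDet.tendsto_mul_tikhonovInv_mul_star_mul_self (hdet : IsFredholmDet fdet)
    {T : H →L[ℂ] H} (hT : IsTraceClass T) (hTB : T * B.ker.starProjection = 0) :
    Tendsto (fun t => fdet (T * (tikhonovInv B t * (star B * B)))) (𝓝[>] 0) (𝓝 (fdet T)) := by
  obtain ⟨u, v, (hrep : HasNuclearRep T u v)⟩ := id hT
  set W := fun t : ℝ => B.ker.starProjection - t • tikhonovInv B t
  have hdiff : ∀ᶠ t in 𝓝[>] (0 : ℝ), HasNuclearRep (T * (tikhonovInv B t * (star B * B)) - T)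
      (fun k => W t (u k)) v :=
    eventually_mem_nhdsWithin.mono fun t (ht : 0 < t) => by
      have hW : T * (tikhonovInv B t * (star B * B)) - T = T * W t := by
        rw [tikhonovInv_mul_star_mul_self B ht, mul_sub, mul_sub, hTB, mul_one]
        abel
      have hadj : adjoint (W t) = W t :=
        (isSelfAdjoint_starProjection_ker_sub_smul_tikhonovInv B ht).adjoint_eq
      have hrepW := hrep.comp_right (W t)
      rw [hadj] at hrepW
      rwa [hW]
  refine hdet.tendsto_of_dominated hT (.of_forall fun t => hT.comp_right _) hdiff
    (hrep.1.mul_left 2) (eventually_mem_nhdsWithin.mono fun t ht k => ?_) fun k => ?_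
  · rw [← mul_assoc]
    gcongr
    exact norm_starProjection_ker_sub_smul_tikhonovInv_apply_le B ht _
  · simpa [W] using
      (tendsto_starProjection_ker_sub_smul_tikhonovInv_apply B (u k)).norm.mul_const ‖v k‖

theorem IsFredholmDet.tendsto_tikhonovInv_mul_star_mul_self_mul (hdet : IsFredholmDet fdet)
    {T : H →L[ℂ] H} (hT : IsTraceClass T) (hBT : B.ker.starProjection * T = 0) :
    Tendsto (fun t => fdet (tikhonovInv B t * (star B * B) * T)) (𝓝[>] 0) (𝓝 (fdet T)) := by
  obtain ⟨u, v, (hrep : HasNuclearRep T u v)⟩ := id hT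
  set W := fun t : ℝ => B.ker.starProjection - t • tikhonovInv B t
  have hdiff : ∀ᶠ t in 𝓝[>] (0 : ℝ), HasNuclearRep (tikhonovInv B t * (star B * B) * T - T)
      u (fun k => W t (v k)) :=
    eventually_mem_nhdsWithin.mono fun t (ht : 0 < t) => by
      have hW : tikhonovInv B t * (star B * B) * T - T = W t * T := by
        rw [tikhonovInv_mul_star_mul_self B ht, sub_mul, sub_mul, hBT, one_mul]
        abel
      rw [hW]
      exact hrep.comp_left (W t)
  refine hdet.tendsto_of_dominated hT (.of_forall fun t => hT.comp_left _) hdiff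
    (hrep.1.mul_left 2) (eventually_mem_nhdsWithin.mono fun t ht k => ?_) fun k => ?_
  · rw [mul_left_comm]
    gcongr
    exact norm_starProjection_ker_sub_smul_tikhonovInv_apply_le B ht _
  · simpa [W] using
      (tendsto_starProjection_ker_sub_smul_tikhonovInv_apply B (v k)).norm.const_mul ‖u k‖

end TraceNormLimits

/-- if `A, B` are bounded operators with `AB` and `BA` trace class, then
`det(I + AB) = det(I + BA)`, where `fdet T` denotes the Fredholm determinant `det(I+T)`. -/
theorem stmt_12 (A B : H →L[ℂ] H) (fdet : (H →L[ℂ] H) → ℂ)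
    (hdet : IsFredholmDet fdet)
    (hAB : IsTraceClass (A ∘L B)) (hBA : IsTraceClass (B ∘L A)) :
    fdet (A ∘L B) = fdet (B ∘L A) := by
  simp only [← mul_def] at hAB hBA ⊢
  have hlim_AB := hdet.tendsto_mul_tikhonovInv_mul_star_mul_self B hAB
    (by rw [mul_assoc, mul_starProjection_ker, mul_zero])
  have hlim_BA := hdet.tendsto_tikhonovInv_mul_star_mul_self_mul (star B) hBA
    (by rw [← mul_assoc, starProjection_ker_star_mul, zero_mul])
  refine tendsto_nhds_unique (hlim_AB.congr' ?_) hlim_BA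
  filter_upwards [self_mem_nhdsWithin] with t (ht : 0 < t)
  set J := tikhonovInv B t
  calc fdet (A * B * (J * (star B * B)))
      = fdet ((A * B * (J * star B)) * B) := by simp only [mul_assoc]
    _ = fdet (B * (A * B * (J * star B))) := hdet.comp_comm (hAB.comp_right _) B
    _ = fdet ((B * A) * (B * J * star B)) := by simp only [mul_assoc]
    _ = fdet ((B * J * star B) * (B * A)) := hdet.comp_comm hBA _
    _ = fdet (tikhonovInv (star B) t * (star (star B) * star B) * (B * A)) := by
      rw [mul_tikhonovInv B ht, star_star, mul_assoc _ B]
end
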